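/- There is a surjective group homomorphism φ from the group S₃^ℤ with presentation ⟨σ₁, σ₂ ∣ σ₁σ₂σ₁ = σ₂σ₁σ₂, σ₁² = σ₂²⟩ onto the symmetric group S₃ on three elements which sends σ₁ to the transposition (1 2) and σ₂ to the transposition (2 3), and the kernel of φ equals the cyclic subgroup of S₃^ℤ generated by σ₁². -/
import Mathlib

/-- Relators of the group `S₃^ℤ`: `σ₁σ₂σ₁σ₂⁻¹σ₁⁻¹σ₂⁻¹` and `σ₁²σ₂⁻²`. -/
def S3ZRels : Set (FreeGroup (Fin 2)) :=
  { FreeGroup.of 0 * FreeGroup.of 1 * FreeGroup.of 0 *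
      (FreeGroup.of 1)⁻¹ * (FreeGroup.of 0)⁻¹ * (FreeGroup.of 1)⁻¹,
    FreeGroup.of 0 ^ 2 * (FreeGroup.of 1 ^ 2)⁻¹ }

namespace S3Zaux

abbrev G := PresentedGroup S3ZRels
noncomputable def a : G := PresentedGroup.of 0
noncomputable def b : G := PresentedGroup.of 1

lemma rel_one {r : FreeGroup (Fin 2)} (h : r ∈ S3ZRels) :
    PresentedGroup.mk S3ZRels r = 1 :=
  (QuotientGroup.eq_one_iff r).2 (Subgroup.subset_normalClosure h)

lemma rel_braid : a * b * a = b * a * b := by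
  have h := rel_one (Set.mem_insert _ _)
  simp only [map_mul, map_inv] at h
  have h2 : (a * b * a) * (b * a * b)⁻¹ = 1 := by
    rw [← h]; unfold a b PresentedGroup.of; group
  exact mul_inv_eq_one.mp h2

lemma rel_sq : a ^ 2 = b ^ 2 := by
  have h := rel_one (Set.mem_insert_of_mem _ rfl)
  simp only [map_mul, map_inv, map_pow] at h
  exact mul_inv_eq_one.mp h

noncomputable def z : G := a ^ 2

lemma central : ∀ g : G, z * g = g * z := by
  intro g
  have hmem : g ∈ Subgroup.centralizer {z} := by
    refine PresentedGroup.generated_by S3ZRels _ ?_ g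
    intro j
    rw [Subgroup.mem_centralizer_iff]
    rintro h rfl
    fin_cases j
    · show z * a = a * z
      unfold z; rw [← pow_succ, ← pow_succ']
    · show z * b = b * z
      unfold z; rw [rel_sq, ← pow_succ, ← pow_succ']
  exact (Subgroup.mem_centralizer_iff.mp hmem) z rfl

noncomputable def K : Subgroup G := Subgroup.zpowers z

instance Knormal : K.Normal := by
  constructor
  intro n hn g
  obtain ⟨k, rfl⟩ := hn
  have h1 : Commute g z := (central g).symm
  show g * z ^ k * g⁻¹ ∈ Subgroup.zpowers z
  rw [(h1.zpow_right k).eq, mul_inv_cancel_right]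
  exact Subgroup.zpow_mem_zpowers z k

noncomputable def π : G →* G ⧸ K := QuotientGroup.mk' K

lemma ha2 : π a * π a = 1 := by
  rw [← map_mul, ← pow_two]
  exact (QuotientGroup.eq_one_iff _).2 (Subgroup.mem_zpowers z)

lemma hb2 : π b * π b = 1 := by
  rw [← map_mul, ← pow_two, ← rel_sq]
  exact (QuotientGroup.eq_one_iff _).2 (Subgroup.mem_zpowers z)

lemma hbr : π a * π b * π a = π b * π a * π b := by
  rw [← map_mul, ← map_mul, ← map_mul, ← map_mul, rel_braid]

/-- Predicate: lies among the six coset representatives. -/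
def P (q : G ⧸ K) : Prop :=
  q = 1 ∨ q = π a ∨ q = π b ∨ q = π a * π b ∨ q = π b * π a ∨ q = π a * π b * π a

lemma stepa {q : G ⧸ K} (h : P q) : P (q * π a) := by
  rcases h with rfl | rfl | rfl | rfl | rfl | rfl
  · right; left; rw [one_mul]
  · left; exact ha2
  · right; right; right; right; left; rfl
  · right; right; right; right; right; rfl
  · right; right; left; rw [mul_assoc, ha2, mul_one]
  · right; right; right; left; rw [mul_assoc, ha2, mul_one]

lemma stepb {q : G ⧸ K} (h : P q) : P (q * π b) := by
  rcases h with rfl | rfl | rfl | rfl | rfl | rfl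
  · right; right; left; rw [one_mul]
  · right; right; right; left; rfl
  · left; exact hb2
  · right; left; rw [mul_assoc, hb2, mul_one]
  · right; right; right; right; right; exact hbr.symm
  · right; right; right; right; left
    calc π a * π b * π a * π b = π a * (π b * π a * π b) := by
          simp only [mul_assoc]
      _ = π a * (π a * π b * π a) := by rw [← hbr]
      _ = π a * π a * (π b * π a) := by simp only [mul_assoc]
      _ = π b * π a := by rw [ha2, one_mul]

lemma ainv : (π a)⁻¹ = π a := inv_eq_of_mul_eq_one_right ha2
lemma binv : (π b)⁻¹ = π b := inv_eq_of_mul_eq_one_right hb2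

lemma repr (g : G) : P (π g) := by
  have hg : g ∈ Subgroup.closure (Set.range (PresentedGroup.of (rels := S3ZRels))) := by
    rw [PresentedGroup.closure_range_of]; trivial
  induction hg using Subgroup.closure_induction_right with
  | one => left; exact map_one π
  | mul_right x hx y hy ih =>
      obtain ⟨j, rfl⟩ := hy
      rw [map_mul]
      fin_cases j
      · exact stepa ih
      · exact stepb ih
  | mul_inv_cancel x hx y hy ih =>
      obtain ⟨j, rfl⟩ := hy
      rw [map_mul, map_inv]
      fin_cases j
      · show P (π x * (π a)⁻¹); rw [ainv]; exact stepa ih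
      · show P (π x * (π b)⁻¹); rw [binv]; exact stepb ih

def f : Fin 2 → Equiv.Perm (Fin 3) := ![Equiv.swap 0 1, Equiv.swap 1 2]

lemma hrels : ∀ r ∈ S3ZRels, FreeGroup.lift f r = 1 := by
  rintro r (rfl | rfl) <;>
    simp only [map_mul, map_inv, map_pow, FreeGroup.lift_apply_of, f] <;> decide

noncomputable def φ : PresentedGroup S3ZRels →* Equiv.Perm (Fin 3) :=
  PresentedGroup.toGroup hrels

lemma φa : φ a = Equiv.swap 0 1 := PresentedGroup.toGroup.of hrels
lemma φb : φ b = Equiv.swap 1 2 := PresentedGroup.toGroup.of hrels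

lemma φz : φ z = 1 := by
  rw [z, map_pow, φa, pow_two, Equiv.swap_mul_self]

lemma φK : ∀ x ∈ K, φ x = 1 := by
  rintro x ⟨k, rfl⟩
  rw [map_zpow, φz, one_zpow]

noncomputable def φbar : G ⧸ K →* Equiv.Perm (Fin 3) := QuotientGroup.lift K φ φK

lemma φbar_π (g : G) : φbar (π g) = φ g := rfl

lemma ker_le : φ.ker ≤ K := by
  intro g hg
  have hg1 : φ g = 1 := hg
  have hsame : ∀ w : G, π g = π w → φ g = φ w := fun w h => by
    rw [← φbar_π g, h, φbar_π]
  rcases repr g with h | h | h | h | h | h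
  · exact (QuotientGroup.eq_one_iff g).1 h
  · rw [hsame a h, φa] at hg1
    exact absurd hg1 (by decide)
  · rw [hsame b h, φb] at hg1
    exact absurd hg1 (by decide)
  · rw [← map_mul] at h
    rw [hsame _ h, map_mul, φa, φb] at hg1
    exact absurd hg1 (by decide)
  · rw [← map_mul] at h
    rw [hsame _ h, map_mul, φb, φa] at hg1
    exact absurd hg1 (by decide)
  · rw [← map_mul, ← map_mul] at h
    rw [hsame _ h, map_mul, map_mul, φa, φb] at hg1
    exact absurd hg1 (by decide)

end S3Zaux

theorem stmt_11 :
    ∃ φ : PresentedGroup S3ZRels →* Equiv.Perm (Fin 3),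
      Function.Surjective φ ∧
      φ (PresentedGroup.of 0) = Equiv.swap 0 1 ∧
      φ (PresentedGroup.of 1) = Equiv.swap 1 2 ∧
      φ.ker = Subgroup.zpowers ((PresentedGroup.of 0 : PresentedGroup S3ZRels) ^ 2) := by
  refine ⟨S3Zaux.φ, ?_, S3Zaux.φa, S3Zaux.φb, ?_⟩
  · intro x
    have h6 : ∀ y : Equiv.Perm (Fin 3), y = 1 ∨ y = Equiv.swap 0 1 ∨ y = Equiv.swap 1 2 ∨
        y = Equiv.swap 0 1 * Equiv.swap 1 2 ∨ y = Equiv.swap 1 2 * Equiv.swap 0 1 ∨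
        y = Equiv.swap 0 1 * Equiv.swap 1 2 * Equiv.swap 0 1 := by decide
    rcases h6 x with rfl | rfl | rfl | rfl | rfl | rfl
    · exact ⟨1, map_one _⟩
    · exact ⟨S3Zaux.a, S3Zaux.φa⟩
    · exact ⟨S3Zaux.b, S3Zaux.φb⟩
    · exact ⟨S3Zaux.a * S3Zaux.b, by rw [map_mul, S3Zaux.φa, S3Zaux.φb]⟩
    · exact ⟨S3Zaux.b * S3Zaux.a, by rw [map_mul, S3Zaux.φa, S3Zaux.φb]⟩
    · exact ⟨S3Zaux.a * S3Zaux.b * S3Zaux.a,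
        by rw [map_mul, map_mul, S3Zaux.φa, S3Zaux.φb]⟩
  · refine le_antisymm S3Zaux.ker_le ?_
    rw [Subgroup.zpowers_le]
    exact S3Zaux.φz
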